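/- Let f : 𝕊ⁿ → ℝ be L₀-Lipschitz with respect to the Frobenius norm, let μ > 0, and let f_μ(X) := E_{U∼𝔾ⁿ}[f(X + μU)] be the Gaussian approximation of f. Then |f_μ(X) − f(X)| ≤ μ · L₀ · sqrt((n² + n)/2) for every X ∈ 𝕊ⁿ. -/

import Mathlib

open MeasureTheory ProbabilityTheory Matrix

noncomputable section

instance matrixMeasurableSpace (n : ℕ) : MeasurableSpace (Matrix (Fin n) (Fin n) ℝ) :=
  inferInstanceAs (MeasurableSpace (Fin n → Fin n → ℝ))

/-- Auxiliary product of independent Gaussians: variance `1` at diagonal positions,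
variance `1/2` at off-diagonal positions. -/
def gaussAux (n : ℕ) : Measure (Fin n → Fin n → ℝ) :=
  Measure.pi fun i => Measure.pi fun j => gaussianReal 0 (if i = j then 1 else 2⁻¹)

/-- The Gaussian orthogonal ensemble `𝔾ⁿ`: the law of the random symmetric matrix whose
entry `(i,j)` with `i ≤ j` is the independent Gaussian `g i j` (so `U_ii ~ N(0,1)`,
`U_ij = U_ji ~ N(0,1/2)` for `i < j`). -/
def goe (n : ℕ) : Measure (Matrix (Fin n) (Fin n) ℝ) :=
  (gaussAux n).map fun g => Matrix.of fun i j => if i ≤ j then g i j else g j i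

/-- The Frobenius norm `‖M‖_F = sqrt (trace (Mᵀ * M))`. -/
def frob {n : ℕ} (M : Matrix (Fin n) (Fin n) ℝ) : ℝ :=
  Real.sqrt (Matrix.trace (Mᵀ * M))

/-!
On symmetric matrices the integrand differs from `f X` by at most `L₀ μ ‖U‖_F`, and the GOE is
carried by the symmetric matrices, so `|f_μ X - f X| ≤ L₀ μ E‖U‖_F ≤ L₀ μ √(E‖U‖_F²)`. The second
moment is the sum of the entry variances: `n` diagonal entries of variance `1` and `n² - n`
off-diagonal ones of variance `1/2`, i.e. `(n² + n) / 2`.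

Since `f` is only controlled on symmetric matrices, measurability of the integrand comes from its
continuity on the closed, full-measure set of symmetric matrices.
-/

open scoped NNReal

lemma integral_sq_gaussianReal (v : ℝ≥0) : ∫ x, x ^ 2 ∂gaussianReal 0 v = v := by
  have h := variance_eq_sub (memLp_id_gaussianReal (μ := 0) (v := v) 2)
  simp only [variance_id_gaussianReal, Pi.pow_apply, id_eq, integral_id_gaussianReal] at h
  simpa using h.symm

lemma integrable_sq_gaussianReal (v : ℝ≥0) : Integrable (fun x : ℝ => x ^ 2) (gaussianReal 0 v) :=
  (memLp_id_gaussianReal 2).integrable_sq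

lemma integral_le_sqrt_integral_sq {Ω : Type*} [MeasurableSpace Ω] {P : Measure Ω}
    [IsProbabilityMeasure P] {h : Ω → ℝ} (hh : MemLp h 2 P) :
    ∫ ω, h ω ∂P ≤ √(∫ ω, h ω ^ 2 ∂P) := by
  have hvar := variance_nonneg h P
  rw [variance_eq_sub hh] at hvar
  exact (le_abs_self _).trans (Real.abs_le_sqrt (by simpa using hvar))

lemma abs_integral_sub_le_of_ae_abs_sub_le {Ω : Type*} [MeasurableSpace Ω] {P : Measure Ω}
    [IsProbabilityMeasure P] {g h : Ω → ℝ} {c : ℝ} (hg : AEStronglyMeasurable g P)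
    (hh : Integrable h P) (hgh : ∀ᵐ ω ∂P, |g ω - c| ≤ h ω) :
    |∫ ω, g ω ∂P - c| ≤ ∫ ω, h ω ∂P := by
  have hgc : Integrable (fun ω => g ω - c) P := hh.mono' (hg.sub aestronglyMeasurable_const) hgh
  have hg_int : Integrable g P :=
    integrable_add_const_iff.mp (by simpa only [sub_eq_add_neg] using hgc)
  have hsub : ∫ ω, g ω ∂P - c = ∫ ω, (g ω - c) ∂P := by
    rw [integral_sub hg_int (integrable_const c), integral_const, probReal_univ, one_smul]
  rw [hsub]
  exact norm_integral_le_of_norm_le (f := fun ω => g ω - c) hh hgh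

instance (n : ℕ) : BorelSpace (Matrix (Fin n) (Fin n) ℝ) :=
  inferInstanceAs (BorelSpace (Fin n → Fin n → ℝ))

instance (n : ℕ) : IsProbabilityMeasure (gaussAux n) := by
  unfold gaussAux; infer_instance

lemma gaussAux_map_apply {n : ℕ} (a b : Fin n) :
    (gaussAux n).map (fun g => g a b) = gaussianReal 0 (if a = b then 1 else 2⁻¹) := by
  have hcomp : (fun g : Fin n → Fin n → ℝ => g a b) =
      (Function.eval b : (Fin n → ℝ) → ℝ) ∘ Function.eval a := rfl
  rw [gaussAux, hcomp, ← Measure.map_map (measurable_pi_apply b) (measurable_pi_apply a),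
    (measurePreserving_eval _ a).map_eq, (measurePreserving_eval _ b).map_eq]

def upperSymm {n : ℕ} (g : Fin n → Fin n → ℝ) : Matrix (Fin n) (Fin n) ℝ :=
  Matrix.of fun i j => if i ≤ j then g i j else g j i

lemma goe_eq_map (n : ℕ) : goe n = (gaussAux n).map upperSymm := rfl

lemma isSymm_upperSymm {n : ℕ} (g : Fin n → Fin n → ℝ) : (upperSymm g).IsSymm := by
  ext i j
  rcases lt_trichotomy i j with h | rfl | h
  · simp [upperSymm, h.le, not_le.mpr h]
  · rfl
  · simp [upperSymm, h.le, not_le.mpr h]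

lemma continuous_upperSymm (n : ℕ) : Continuous (upperSymm (n := n)) := by
  refine continuous_pi fun i => continuous_pi fun j => ?_
  simp only [upperSymm, Matrix.of_apply]
  split_ifs <;> fun_prop

lemma measurable_upperSymm_apply {n : ℕ} (i j : Fin n) :
    Measurable fun g : Fin n → Fin n → ℝ => upperSymm g i j :=
  ((continuous_apply j).comp ((continuous_apply i).comp (continuous_upperSymm n))).measurable

lemma gaussAux_map_upperSymm_apply {n : ℕ} (i j : Fin n) :
    (gaussAux n).map (fun g => upperSymm g i j) = gaussianReal 0 (if i = j then 1 else 2⁻¹) := by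
  by_cases hij : i ≤ j
  · simpa [upperSymm, hij] using gaussAux_map_apply i j
  · simpa [upperSymm, hij, eq_comm] using gaussAux_map_apply j i

instance (n : ℕ) : IsProbabilityMeasure (goe n) :=
  Measure.isProbabilityMeasure_map (continuous_upperSymm n).aemeasurable

lemma Matrix.isClosed_setOf_isSymm {m α : Type*} [TopologicalSpace α] [T2Space α] :
    IsClosed {A : Matrix m m α | A.IsSymm} :=
  isClosed_eq continuous_id.matrix_transpose continuous_id

lemma ae_isSymm_goe (n : ℕ) : ∀ᵐ U ∂goe n, U.IsSymm := by
  rw [goe_eq_map, ae_map_iff (continuous_upperSymm n).aemeasurable]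
  · exact ae_of_all _ isSymm_upperSymm
  · exact Matrix.isClosed_setOf_isSymm.measurableSet

lemma aestronglyMeasurable_goe_of_continuousOn {n : ℕ} {F : Matrix (Fin n) (Fin n) ℝ → ℝ}
    (hF : ContinuousOn F {U | U.IsSymm}) : AEStronglyMeasurable F (goe n) := by
  rw [← Measure.restrict_eq_self_of_ae_mem (ae_isSymm_goe n)]
  exact hF.aestronglyMeasurable Matrix.isClosed_setOf_isSymm.measurableSet

lemma frob_eq_sqrt_sum {n : ℕ} (M : Matrix (Fin n) (Fin n) ℝ) :
    frob M = √(∑ i, ∑ j, M i j ^ 2) := by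
  rw [frob, Matrix.trace, Finset.sum_comm]
  simp [Matrix.mul_apply, sq]

lemma frob_sq {n : ℕ} (M : Matrix (Fin n) (Fin n) ℝ) : frob M ^ 2 = ∑ i, ∑ j, M i j ^ 2 := by
  rw [frob_eq_sqrt_sum, Real.sq_sqrt (by positivity)]

lemma continuous_frob (n : ℕ) : Continuous (frob (n := n)) := by
  simp_rw [funext frob_eq_sqrt_sum]
  fun_prop

lemma frob_smul {n : ℕ} {c : ℝ} (hc : 0 ≤ c) (M : Matrix (Fin n) (Fin n) ℝ) :
    frob (c • M) = c * frob M := by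
  simp only [frob, Matrix.transpose_smul, Matrix.smul_mul, Matrix.mul_smul, Matrix.trace_smul,
    smul_smul, smul_eq_mul]
  rw [Real.sqrt_mul (mul_self_nonneg c), Real.sqrt_mul_self hc]

lemma frob_one (n : ℕ) : frob (1 : Matrix (Fin n) (Fin n) ℝ) = √n := by
  simp [frob]

lemma integrable_sq_upperSymm_apply {n : ℕ} (i j : Fin n) :
    Integrable (fun g => upperSymm g i j ^ 2) (gaussAux n) := by
  have h := integrable_sq_gaussianReal (if i = j then 1 else 2⁻¹)
  rw [← gaussAux_map_upperSymm_apply, integrable_map_measure (by fun_prop)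
    (measurable_upperSymm_apply i j).aemeasurable] at h
  exact h

lemma integral_sq_upperSymm_apply {n : ℕ} (i j : Fin n) :
    ∫ g, upperSymm g i j ^ 2 ∂gaussAux n = if i = j then 1 else 2⁻¹ := by
  have h := integral_sq_gaussianReal (if i = j then 1 else 2⁻¹)
  rw [← gaussAux_map_upperSymm_apply, integral_map (measurable_upperSymm_apply i j).aemeasurable
    (by fun_prop)] at h
  rw [h]
  split_ifs <;> simp

lemma sum_sum_ite_one_inv_two (ι : Type*) [Fintype ι] [DecidableEq ι] :
    ∑ i : ι, ∑ j : ι, (if i = j then 1 else 2⁻¹ : ℝ) =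
      ((Fintype.card ι : ℝ) ^ 2 + Fintype.card ι) / 2 := by
  have h : ∀ i j : ι, (if i = j then 1 else 2⁻¹ : ℝ) = 2⁻¹ + if i = j then 2⁻¹ else 0 := by
    intro i j
    split_ifs <;> norm_num
  simp only [h, Finset.sum_add_distrib, Finset.sum_ite_eq, Finset.mem_univ, if_true,
    Finset.sum_const, Finset.card_univ, nsmul_eq_mul]
  ring

lemma continuous_frob_sq (n : ℕ) : Continuous fun U : Matrix (Fin n) (Fin n) ℝ => frob U ^ 2 :=
  (continuous_frob n).pow 2

lemma integrable_frob_sq_goe (n : ℕ) : Integrable (fun U => frob U ^ 2) (goe n) := by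
  rw [goe_eq_map, integrable_map_measure (continuous_frob_sq n).aestronglyMeasurable
    (continuous_upperSymm n).aemeasurable]
  simp only [Function.comp_def, frob_sq]
  exact integrable_finsetSum _ fun i _ => integrable_finsetSum _ fun j _ =>
    integrable_sq_upperSymm_apply i j

lemma integral_frob_sq_goe (n : ℕ) : ∫ U, frob U ^ 2 ∂goe n = ((n : ℝ) ^ 2 + n) / 2 := by
  rw [goe_eq_map, integral_map (continuous_upperSymm n).aemeasurable
    (continuous_frob_sq n).aestronglyMeasurable]
  simp only [frob_sq]
  rw [integral_finsetSum _ fun i _ => integrable_finsetSum _ fun j _ =>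
    integrable_sq_upperSymm_apply i j]
  simp only [integral_finsetSum _ fun j _ => integrable_sq_upperSymm_apply _ j,
    integral_sq_upperSymm_apply, sum_sum_ite_one_inv_two, Fintype.card_fin]

lemma memLp_frob_goe (n : ℕ) : MemLp frob 2 (goe n) :=
  (memLp_two_iff_integrable_sq (continuous_frob n).aestronglyMeasurable).mpr
    (integrable_frob_sq_goe n)

lemma integral_frob_goe_le (n : ℕ) : ∫ U, frob U ∂goe n ≤ √(((n : ℝ) ^ 2 + n) / 2) := by
  simpa [integral_frob_sq_goe] using integral_le_sqrt_integral_sq (memLp_frob_goe n)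

lemma continuousOn_of_abs_sub_le_mul_frob {n : ℕ} {F : Matrix (Fin n) (Fin n) ℝ → ℝ}
    {s : Set (Matrix (Fin n) (Fin n) ℝ)} {C : ℝ}
    (hF : ∀ U ∈ s, ∀ V ∈ s, |F U - F V| ≤ C * frob (U - V)) : ContinuousOn F s := by
  intro V hV
  have hlim : Filter.Tendsto (fun U => C * frob (U - V)) (nhdsWithin V s) (nhds 0) := by
    have hcont : Continuous fun U => C * frob (U - V) :=
      continuous_const.mul ((continuous_frob n).comp (continuous_id.sub continuous_const))
    simpa [ContinuousWithinAt, frob] using hcont.continuousWithinAt (s := s) (x := V)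
  rw [ContinuousWithinAt, tendsto_iff_dist_tendsto_zero]
  refine squeeze_zero' (Filter.Eventually.of_forall fun _ => dist_nonneg)
    (eventually_mem_nhdsWithin.mono fun U hU => ?_) hlim
  rw [Real.dist_eq]
  exact hF U hU V hV

lemma nonneg_of_abs_sub_le_mul_frob {n : ℕ} (hn : 0 < n) {F : Matrix (Fin n) (Fin n) ℝ → ℝ}
    {C : ℝ} (hF : ∀ U V : Matrix (Fin n) (Fin n) ℝ, U.IsSymm → V.IsSymm →
      |F U - F V| ≤ C * frob (U - V)) : 0 ≤ C := by
  have h := (abs_nonneg _).trans (hF 1 0 Matrix.isSymm_one Matrix.isSymm_zero)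
  rw [sub_zero, frob_one] at h
  exact nonneg_of_mul_nonneg_left h (by positivity)

/-- If `f : 𝕊ⁿ → ℝ` is `L₀`-Lipschitz w.r.t. the Frobenius norm and
`μ > 0`, then the Gaussian approximation `f_μ(X) = E_{U∼𝔾ⁿ}[f(X + μU)]` satisfies
`|f_μ(X) − f(X)| ≤ μ L₀ sqrt((n² + n)/2)` for every symmetric `X`. -/
theorem gaussian_approx_gap (n : ℕ) (f : Matrix (Fin n) (Fin n) ℝ → ℝ) (L₀ : ℝ)
    (hlip : ∀ X Y : Matrix (Fin n) (Fin n) ℝ, X.IsSymm → Y.IsSymm →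
      |f X - f Y| ≤ L₀ * frob (X - Y))
    (μ : ℝ) (hμ : 0 < μ)
    (X : Matrix (Fin n) (Fin n) ℝ) (hX : X.IsSymm) :
    |(∫ U, f (X + μ • U) ∂(goe n)) - f X| ≤ μ * L₀ * Real.sqrt (((n : ℝ) ^ 2 + n) / 2) := by
  rcases n.eq_zero_or_pos with rfl | hn
  · have hconst : ∀ U, X + μ • U = X := fun _ => Subsingleton.elim _ _
    simp [hconst]
  have hL₀ : 0 ≤ L₀ := nonneg_of_abs_sub_le_mul_frob hn hlip
  have hlipμ : ∀ U V : Matrix (Fin n) (Fin n) ℝ, U.IsSymm → V.IsSymm →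
      |f (X + μ • U) - f (X + μ • V)| ≤ L₀ * μ * frob (U - V) := fun U V hU hV => by
    simpa [← smul_sub, frob_smul hμ.le, mul_assoc] using
      hlip _ _ (hX.add (hU.smul μ)) (hX.add (hV.smul μ))
  have hcont : ContinuousOn (fun U => f (X + μ • U)) {U | U.IsSymm} :=
    continuousOn_of_abs_sub_le_mul_frob fun U hU V hV => hlipμ U V hU hV
  have hgap : ∀ᵐ U ∂goe n, |f (X + μ • U) - f X| ≤ L₀ * μ * frob U :=
    (ae_isSymm_goe n).mono fun U hU => by simpa using hlipμ U 0 hU Matrix.isSymm_zero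
  calc |∫ U, f (X + μ • U) ∂goe n - f X| ≤ ∫ U, L₀ * μ * frob U ∂goe n :=
        abs_integral_sub_le_of_ae_abs_sub_le (aestronglyMeasurable_goe_of_continuousOn hcont)
          (((memLp_frob_goe n).integrable one_le_two).const_mul _) hgap
    _ ≤ L₀ * μ * √(((n : ℝ) ^ 2 + n) / 2) := by
        rw [integral_const_mul]
        exact mul_le_mul_of_nonneg_left (integral_frob_goe_le n) (by positivity)
    _ = μ * L₀ * √(((n : ℝ) ^ 2 + n) / 2) := by ring
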